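/- arXiv:1503.05735 — 5 statements merged into one kernel-verified Lean document; each statement's English description precedes it below -/
import Mathlib

section
/- Let G be a finite connected graph, ℓ ∈ {0,...,|V(G)|}, and α > 0. Let Q^(ℓ) be the generator of the symmetric exclusion process on configurations with exactly ℓ black marbles, i.e. (-Q^(ℓ)f)(x) = α · Σ_{e ∈ E(G)} (f(x) - f(x_e)), where x_e is x with the marbles at the endpoints of e swapped. If ψ is an eigenvector of -Q^(ℓ) with eigenvalue λ, then the function ψ_+ defined on configurations x with ℓ-1 black marbles by ψ_+(x) = Σ_{v : x(v)=0} ψ(x_v) (where x_v adds a black marble at v) satisfies -Q^(ℓ-1) ψ_+ = λ ψ_+. In particular ψ_+ is either identically zero or an eigenvector of -Q^(ℓ-1) with eigenvalue λ. -/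
open Finset

/-- Swap the values of a configuration at two vertices. -/
def swapAt {V : Type*} [DecidableEq V] (x : V → Bool) (u v : V) : V → Bool :=
  fun w => if w = u then x v else if w = v then x u else x w

/-- Number of black marbles (`true` coordinates) of a configuration. -/
def countB {V : Type*} [Fintype V] (x : V → Bool) : ℕ :=
  (Finset.univ.filter fun v => x v = true).card

/-- The negative generator `-Q` of the symmetric exclusion process on `G` with rate `α`:
`(-Qf)(x) = α Σ_{e ∈ E(G)} (f x - f x_e)`, written as half the sum over ordered adjacent pairs. -/
noncomputable def negGen {V : Type*} [Fintype V] [DecidableEq V] (G : SimpleGraph V) [DecidableRel G.Adj]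
    (α : ℝ) (f : (V → Bool) → ℝ) (x : V → Bool) : ℝ :=
  (α / 2) * ∑ u : V, ∑ v : V, if G.Adj u v then f x - f (swapAt x u v) else 0

/-- `ψ_+(x) = Σ_{v : x(v)=0} ψ(x_v)`, adding a black marble at `v`. -/
def plusOp {V : Type*} [Fintype V] [DecidableEq V] (ψ : (V → Bool) → ℝ) (x : V → Bool) : ℝ :=
  ∑ v ∈ Finset.univ.filter (fun v => x v = false), ψ (Function.update x v true)

/-- `ψ_-(x) = Σ_{v : x(v)=1} ψ(x_v)`, removing the black marble at `v`. -/
def minusOp {V : Type*} [Fintype V] [DecidableEq V] (ψ : (V → Bool) → ℝ) (x : V → Bool) : ℝ :=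
  ∑ v ∈ Finset.univ.filter (fun v => x v = true), ψ (Function.update x v false)

/-- Inner product at level `ℓ` with respect to the uniform measure on `ℓ`-subsets. -/
noncomputable def innerL {V : Type*} [Fintype V] [DecidableEq V] (ℓ : ℕ) (f g : (V → Bool) → ℝ) : ℝ :=
  (((Fintype.card V).choose ℓ : ℝ))⁻¹ *
    ∑ x ∈ Finset.univ.filter (fun x : V → Bool => countB x = ℓ), f x * g x

/-- Inner product on the full configuration space with respect to the uniform measure. -/
noncomputable def innerF {V : Type*} [Fintype V] [DecidableEq V] (f g : (V → Bool) → ℝ) : ℝ :=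
  ((2 : ℝ) ^ (Fintype.card V))⁻¹ * ∑ x : V → Bool, f x * g x

/-! Adding a marble commutes with the exclusion dynamics: swapping along an edge `{u, v}` and
then adding a marble at `w` is the same as adding a marble at `swap u v w` and then swapping.
Hence `-Q (ψ₊) = (-Q ψ)₊`, and `(-Q ψ)₊ = λ ψ₊` on level `ℓ - 1` because `ψ₊` there only
reads `ψ` on level `ℓ`. -/

theorem swapAt_eq_comp_swap {V : Type*} [DecidableEq V] (x : V → Bool) (u v : V) :
    swapAt x u v = x ∘ Equiv.swap u v := by
  funext w
  simp only [swapAt, Function.comp_apply, Equiv.swap_apply_def]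
  split_ifs with hu hv <;> simp_all

theorem swapAt_update {V : Type*} [DecidableEq V] (x : V → Bool) (u v w : V) (b : Bool) :
    swapAt (Function.update x w b) u v = Function.update (swapAt x u v) (Equiv.swap u v w) b := by
  simpa [swapAt_eq_comp_swap] using Function.update_comp_equiv x (Equiv.swap u v) w b

theorem swapAt_eq_self {V : Type*} [DecidableEq V] {x : V → Bool} {u v : V} (h : x u = x v) :
    swapAt x u v = x := by
  funext w
  simp only [swapAt]
  split_ifs with hu hv <;> simp_all

theorem plusOp_swapAt {V : Type*} [Fintype V] [DecidableEq V]
    (ψ : (V → Bool) → ℝ) (x : V → Bool) (u v : V) :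
    plusOp ψ (swapAt x u v)
      = ∑ w ∈ univ.filter (fun w => x w = false), ψ (swapAt (Function.update x w true) u v) := by
  refine (sum_equiv (Equiv.swap u v) (fun w => ?_) fun w _ => by rw [swapAt_update]).symm
  simp [swapAt_eq_comp_swap]

theorem negGen_plusOp {V : Type*} [Fintype V] [DecidableEq V] (G : SimpleGraph V)
    [DecidableRel G.Adj] (α : ℝ) (ψ : (V → Bool) → ℝ) :
    negGen G α (plusOp ψ) = plusOp (negGen G α ψ) := by
  funext x
  have hedge : ∀ u v, (if G.Adj u v then plusOp ψ x - plusOp ψ (swapAt x u v) else 0)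
      = ∑ w ∈ univ.filter (fun w => x w = false), if G.Adj u v then
          ψ (Function.update x w true) - ψ (swapAt (Function.update x w true) u v) else 0 := by
    intro u v
    split_ifs
    · rw [plusOp_swapAt, plusOp, sum_sub_distrib]
    · simp
  rw [plusOp]
  simp only [negGen, hedge, ← mul_sum]
  congr 1
  exact (sum_congr rfl fun u _ => sum_comm).trans sum_comm

theorem countB_update_true {V : Type*} [Fintype V] [DecidableEq V] {x : V → Bool} {w : V}
    (hw : x w = false) : countB (Function.update x w true) = countB x + 1 := by
  have h : univ.filter (fun v => Function.update x w true v = true)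
      = insert w (univ.filter fun v => x v = true) := by
    ext v
    by_cases hv : v = w <;> simp [Function.update_apply, hv]
  rw [countB, h, card_insert_of_notMem (by simp [hw]), countB]

theorem negGen_of_countB_eq_zero {V : Type*} [Fintype V] [DecidableEq V] (G : SimpleGraph V)
    [DecidableRel G.Adj] (α : ℝ) (f : (V → Bool) → ℝ) {x : V → Bool} (hx : countB x = 0) :
    negGen G α f x = 0 := by
  have hfalse : ∀ v, x v = false := by
    simpa [countB, card_eq_zero, filter_eq_empty_iff] using hx
  have hfixed : ∀ u v, swapAt x u v = x := fun u v => swapAt_eq_self (by rw [hfalse, hfalse])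
  simp [negGen, hfixed]

theorem plusOp_is_eigenvector_general {V : Type*} [Fintype V] [DecidableEq V]
    (G : SimpleGraph V) [DecidableRel G.Adj]
    (α : ℝ) (ℓ : ℕ)
    (ψ : (V → Bool) → ℝ) (lam : ℝ)
    (hψ : ∃ x, countB x = ℓ ∧ ψ x ≠ 0)
    (heig : ∀ x, countB x = ℓ → negGen G α ψ x = lam * ψ x) :
    ∀ x, countB x = ℓ - 1 → negGen G α (plusOp ψ) x = lam * plusOp ψ x := by
  intro x hx
  rcases Nat.eq_zero_or_pos ℓ with rfl | hℓ
  · -- `ℓ - 1` truncates to `0`; `-Q` vanishes at the empty configuration, so `hψ` forces `lam = 0`.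
    obtain ⟨y, hy, hψy⟩ := hψ
    have hlam : lam = 0 := by
      simpa [hψy, negGen_of_countB_eq_zero G α ψ hy] using (heig y hy).symm
    rw [negGen_of_countB_eq_zero G α _ hx, hlam, zero_mul]
  · rw [negGen_plusOp, plusOp, plusOp, mul_sum]
    refine sum_congr rfl fun w hw => heig _ ?_
    rw [countB_update_true (mem_filter.mp hw).2, hx]
    omega

/-- If ψ is an eigenvector of -Q^(ℓ) with eigenvalue λ, then ψ₊ satisfies
-Q^(ℓ-1) ψ₊ = λ ψ₊ on configurations with ℓ-1 black marbles. -/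
theorem plusOp_is_eigenvector {V : Type*} [Fintype V] [DecidableEq V]
    (G : SimpleGraph V) [DecidableRel G.Adj] (hG : G.Connected)
    (α : ℝ) (hα : 0 < α) (ℓ : ℕ) (hℓ : ℓ ≤ Fintype.card V)
    (ψ : (V → Bool) → ℝ) (lam : ℝ)
    (hψ : ∃ x, countB x = ℓ ∧ ψ x ≠ 0)
    (heig : ∀ x, countB x = ℓ → negGen G α ψ x = lam * ψ x) :
    ∀ x, countB x = ℓ - 1 → negGen G α (plusOp ψ) x = lam * plusOp ψ x :=
  plusOp_is_eigenvector_general G α ℓ ψ lam hψ heig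
end

section
/- Let G be a finite connected graph, ℓ ∈ {0,...,|V(G)|-1}, α > 0, and Q^(ℓ) the generator of the symmetric exclusion process with ℓ black marbles and rate α. If ψ is an eigenvector of -Q^(ℓ) with eigenvalue λ, then the function ψ_- defined on configurations x with ℓ+1 black marbles by ψ_-(x) = Σ_{v : x(v)=1} ψ(x_v) (where x_v removes the black marble at v) satisfies -Q^(ℓ+1) ψ_- = λ ψ_-. -/
open Finset

lemma swapAt_eq_comp {V : Type*} [DecidableEq V] (x : V → Bool) (u v : V) :
    swapAt x u v = fun w => x (Equiv.swap u v w) := by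
  funext w
  simp only [swapAt, Equiv.swap_apply_def]
  split_ifs <;> rfl

lemma update_swapAt {V : Type*} [DecidableEq V] (x : V → Bool) (u v w : V) (b : Bool) :
    Function.update (swapAt x u v) (Equiv.swap u v w) b = swapAt (Function.update x w b) u v := by
  funext z
  rw [swapAt_eq_comp, swapAt_eq_comp]
  by_cases h : z = Equiv.swap u v w
  · subst h
    simp only [Function.update_self]
    rw [Equiv.swap_apply_self, Function.update_self]
  · have h2 : Equiv.swap u v z ≠ w := fun hh => h (by rw [← hh]; simp)
    simp [Function.update_of_ne h, Function.update_of_ne h2]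

lemma minusOp_swapAt {V : Type*} [Fintype V] [DecidableEq V] (ψ : (V → Bool) → ℝ)
    (x : V → Bool) (u v : V) :
    minusOp ψ (swapAt x u v) =
      ∑ w ∈ Finset.univ.filter (fun w => x w = true),
        ψ (swapAt (Function.update x w false) u v) := by
  unfold minusOp
  rw [Finset.sum_filter, Finset.sum_filter]
  refine Fintype.sum_equiv (Equiv.swap u v) _ _ fun w => ?_
  have h1 : swapAt x u v w = x (Equiv.swap u v w) := by rw [swapAt_eq_comp]
  have h2 := update_swapAt x u v (Equiv.swap u v w) false
  rw [Equiv.swap_apply_self] at h2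
  rw [h1, h2]

lemma countB_update_false {V : Type*} [Fintype V] [DecidableEq V]
    (x : V → Bool) (w : V) (hw : x w = true) :
    countB (Function.update x w false) = countB x - 1 := by
  unfold countB
  have h : (Finset.univ.filter fun v => Function.update x w false v = true)
      = (Finset.univ.filter fun v => x v = true).erase w := by
    ext z
    by_cases h : z = w
    · subst h; simp
    · simp [Function.update_of_ne h, h]
  rw [h, Finset.card_erase_of_mem (by simp [hw])]

/-- If ψ is an eigenvector of -Q^(ℓ) with eigenvalue λ, then ψ₋ satisfies
-Q^(ℓ+1) ψ₋ = λ ψ₋ on configurations with ℓ+1 black marbles. -/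
theorem minusOp_is_eigenvector {V : Type*} [Fintype V] [DecidableEq V]
    (G : SimpleGraph V) [DecidableRel G.Adj] (hG : G.Connected)
    (α : ℝ) (hα : 0 < α) (ℓ : ℕ) (hℓ : ℓ < Fintype.card V)
    (ψ : (V → Bool) → ℝ) (lam : ℝ)
    (hψ : ∃ x, countB x = ℓ ∧ ψ x ≠ 0)
    (heig : ∀ x, countB x = ℓ → negGen G α ψ x = lam * ψ x) :
    ∀ x, countB x = ℓ + 1 → negGen G α (minusOp ψ) x = lam * minusOp ψ x := by
  intro x hx
  have key : negGen G α (minusOp ψ) x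
      = ∑ w ∈ Finset.univ.filter (fun w => x w = true),
          negGen G α ψ (Function.update x w false) := by
    have h1 : ∀ u v : V, (if G.Adj u v then minusOp ψ x - minusOp ψ (swapAt x u v) else 0)
        = ∑ w ∈ Finset.univ.filter (fun w => x w = true),
            (if G.Adj u v then ψ (Function.update x w false)
              - ψ (swapAt (Function.update x w false) u v) else 0) := by
      intro u v
      split_ifs with h
      · rw [minusOp_swapAt]
        unfold minusOp
        rw [← Finset.sum_sub_distrib]
      · simp
    unfold negGen
    simp only [h1]
    have h2 : ∀ u : V, (∑ v : V, ∑ w ∈ Finset.univ.filter (fun w => x w = true),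
          (if G.Adj u v then ψ (Function.update x w false)
            - ψ (swapAt (Function.update x w false) u v) else 0))
        = ∑ w ∈ Finset.univ.filter (fun w => x w = true), ∑ v : V,
          (if G.Adj u v then ψ (Function.update x w false)
            - ψ (swapAt (Function.update x w false) u v) else 0) := fun u => Finset.sum_comm
    simp only [h2]
    rw [Finset.sum_comm, Finset.mul_sum]
  rw [key]
  have hcnt : ∀ w ∈ Finset.univ.filter (fun w => x w = true),
      countB (Function.update x w false) = ℓ := by
    intro w hw
    rw [countB_update_false x w (by simpa using hw), hx]
    omega
  rw [Finset.sum_congr rfl (fun w hw => heig _ (hcnt w hw)), ← Finset.mul_sum]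
  rfl
end

section
/- Let n ≥ 1, α > 0, and let Q_n^(ℓ) be the generator of the symmetric exclusion process on K_n with ℓ black marbles and rate α. If ψ is an eigenvector of -Q_n^(ℓ) with eigenvalue λ, then ⟨ψ_-, ψ_-⟩ = ((ℓ+1)/(α(n-ℓ))) · (α(ℓ+1)(n-ℓ) - λ) · ⟨ψ, ψ⟩, where ψ_-(x) = Σ_{v : x(v)=1} ψ(x_v) for configurations x with ℓ+1 black marbles. -/
open Finset

/-!
Moving one marble turns `∑_{|x| = ℓ+1} ψ₋(x)²` into `∑_{|y| = ℓ} ψ(y) (ψ₋)₊(y)`. At a configuration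
`y` with `ℓ` marbles, `(ψ₋)₊(y)` is `(n - ℓ) ψ(y)` plus the sum of `ψ` over the configurations
obtained by swapping a white and a black marble of `y`; on `K_n` the eigenvalue equation evaluates
that sum as `(ℓ (n - ℓ) - λ/α) ψ(y)`. The normalisations of the two levels are compared by
`C(n, ℓ+1) (ℓ+1) = C(n, ℓ) (n - ℓ)`.
-/

open Function

namespace Configuration

variable {V : Type*}

section
variable [DecidableEq V]

theorem swapAt_comm (x : V → Bool) (u v : V) : swapAt x u v = swapAt x v u := by
  funext w
  simp only [swapAt]
  split_ifs <;> simp_all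

theorem swapAt_eq_self_of_eq {x : V → Bool} {u v : V} (h : x u = x v) : swapAt x u v = x := by
  funext w
  simp only [swapAt]
  split_ifs <;> simp_all

theorem update_update_eq_swapAt {y : V → Bool} {u v : V} (hu : y u = false) (hv : y v = true) :
    update (update y u true) v false = swapAt y u v := by
  have hvu : v ≠ u := by rintro rfl; simp_all
  funext w
  by_cases hwv : w = v
  · simp [swapAt, hwv, hvu, hu]
  · by_cases hwu : w = u <;> simp [swapAt, hwv, hwu, hv, hvu.symm]

end

theorem card_filter_false [Fintype V] (y : V → Bool) :
    (#{v | y v = false} : ℝ) = Fintype.card V - countB y := by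
  have h := card_filter_add_card_filter_not (s := univ) (fun v => y v = true)
  simp only [Bool.not_eq_true, card_univ] at h
  rw [countB, ← h]
  push_cast
  ring

variable [Fintype V] [DecidableEq V]

theorem filter_update_true (y : V → Bool) (u : V) :
    ({v | update y u true v = true} : Finset V) = insert u ({v | y v = true} : Finset V) := by
  ext v
  by_cases hv : v = u <;> simp [update_apply, hv]

theorem filter_update_false (x : V → Bool) (u : V) :
    ({v | update x u false v = true} : Finset V) = ({v | x v = true} : Finset V).erase u := by
  ext v
  by_cases hv : v = u <;> simp [update_apply, hv]

theorem countB_update_true {y : V → Bool} {u : V} (hu : y u = false) :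
    countB (update y u true) = countB y + 1 := by
  rw [countB, filter_update_true, card_insert_of_notMem (by simp [hu]), countB]

theorem countB_update_false {x : V → Bool} {u : V} (hu : x u = true) :
    countB (update x u false) + 1 = countB x := by
  rw [countB, filter_update_false, card_erase_add_one (by simp [hu]), countB]

theorem sum_countB_succ_sum_true {M : Type*} [AddCommMonoid M] (ℓ : ℕ) (F : (V → Bool) → V → M) :
    ∑ x with countB x = ℓ + 1, ∑ u with x u = true, F x u
      = ∑ y with countB y = ℓ, ∑ u with y u = false, F (update y u true) u := by
  rw [sum_sigma', sum_sigma']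
  refine sum_nbij' (fun p => ⟨update p.1 p.2 false, p.2⟩) (fun p => ⟨update p.1 p.2 true, p.2⟩)
    ?_ ?_ ?_ ?_ ?_ <;> rintro ⟨x, u⟩ hp <;>
    simp only [mem_sigma, mem_filter, mem_univ, true_and] at hp ⊢
  · have := countB_update_false hp.2
    exact ⟨by omega, update_self ..⟩
  · have := countB_update_true hp.2
    exact ⟨by omega, update_self ..⟩
  · rw [update_idem, ← hp.2, update_eq_self]
  · rw [update_idem, ← hp.2, update_eq_self]
  · rw [update_idem, ← hp.2, update_eq_self]

theorem sum_minusOp_mul (ℓ : ℕ) (ψ φ : (V → Bool) → ℝ) :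
    ∑ x with countB x = ℓ + 1, minusOp ψ x * φ x = ∑ y with countB y = ℓ, ψ y * plusOp φ y := by
  simp only [minusOp, plusOp, sum_mul, mul_sum]
  rw [sum_countB_succ_sum_true ℓ fun x u => ψ (update x u false) * φ x]
  refine sum_congr rfl fun y _ => sum_congr rfl fun u hu => ?_
  rw [update_idem, ← (mem_filter.mp hu).2, update_eq_self]

theorem minusOp_update_true (f : (V → Bool) → ℝ) {y : V → Bool} {u : V} (hu : y u = false) :
    minusOp f (update y u true) = f y + ∑ v with y v = true, f (swapAt y u v) := by
  rw [minusOp, filter_update_true, sum_insert (by simp [hu]), update_idem, ← hu, update_eq_self]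
  refine congrArg _ (sum_congr rfl fun v hv => ?_)
  rw [hu, update_update_eq_swapAt hu (mem_filter.mp hv).2]

theorem plusOp_minusOp (f : (V → Bool) → ℝ) (y : V → Bool) :
    plusOp (minusOp f) y
      = (Fintype.card V - countB y) * f y
          + ∑ u with y u = false, ∑ v with y v = true, f (swapAt y u v) := by
  rw [plusOp, sum_congr rfl fun u hu => minusOp_update_true f (mem_filter.mp hu).2,
    sum_add_distrib, sum_const, nsmul_eq_mul, card_filter_false]

/-- Swapping two marbles of the same colour fixes the configuration, and `negGen` counts each
unordered white–black pair twice. -/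
theorem negGen_top (α : ℝ) (f : (V → Bool) → ℝ) (x : V → Bool) :
    negGen ⊤ α f x = α * ∑ u with x u = false, ∑ v with x v = true, (f x - f (swapAt x u v)) := by
  unfold negGen
  let d : V → V → ℝ := fun u v => f x - f (swapAt x u v)
  have hd_comm (u v : V) : d u v = d v u := by simp only [d, swapAt_comm]
  have hd_eq (u v : V) (h : x u = x v) : d u v = 0 := by simp [d, swapAt_eq_self_of_eq h]
  have hsplit (u v : V) : (if (⊤ : SimpleGraph V).Adj u v then d u v else 0)
      = (if x u = false ∧ x v = true then d u v else 0)
        + (if x v = false ∧ x u = true then d v u else 0) := by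
    by_cases huv : u = v
    · subst huv; simp
    · rw [← hd_comm]
      cases hu : x u <;> cases hv : x v <;> simp [huv, hd_eq, hu, hv]
  have hfilter : ∑ u, ∑ v, (if x u = false ∧ x v = true then d u v else 0)
      = ∑ u with x u = false, ∑ v with x v = true, d u v := by
    simp only [sum_filter, ite_and, ite_sum_zero]
  change α / 2 * ∑ u, ∑ v, (if (⊤ : SimpleGraph V).Adj u v then d u v else 0)
    = α * ∑ u with x u = false, ∑ v with x v = true, d u v
  simp only [hsplit, sum_add_distrib]
  rw [sum_comm (f := fun u v => if x v = false ∧ x u = true then d v u else 0),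
    hfilter]
  ring

theorem mul_plusOp_minusOp (α : ℝ) (f : (V → Bool) → ℝ) (y : V → Bool) :
    α * plusOp (minusOp f) y
      = α * (countB y + 1) * (Fintype.card V - countB y) * f y - negGen ⊤ α f y := by
  have hT : (#{v | y v = true} : ℝ) = countB y := rfl
  simp only [plusOp_minusOp, negGen_top, sum_sub_distrib, sum_const, nsmul_eq_mul,
    card_filter_false, hT]
  ring

end Configuration

open Configuration in
theorem minusOp_length_general {n : ℕ} (ℓ : ℕ) (hℓn : ℓ < n)
    (α : ℝ) (hα : 0 < α)
    (ψ : (Fin n → Bool) → ℝ) (lam : ℝ)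
    (heig : ∀ x, countB x = ℓ →
      negGen (⊤ : SimpleGraph (Fin n)) α ψ x = lam * ψ x) :
    innerL (ℓ + 1) (minusOp ψ) (minusOp ψ)
      = (((ℓ : ℝ) + 1) / (α * ((n : ℝ) - ℓ))) * (α * ((ℓ : ℝ) + 1) * ((n : ℝ) - ℓ) - lam)
          * innerL ℓ ψ ψ := by
  have hsum : α * ∑ x with countB x = ℓ + 1, minusOp ψ x ^ 2
      = (α * (ℓ + 1) * (n - ℓ) - lam) * ∑ y with countB y = ℓ, ψ y ^ 2 := by
    simp only [sq]
    rw [sum_minusOp_mul, mul_sum, mul_sum]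
    refine sum_congr rfl fun y hy => ?_
    have hy : countB y = ℓ := (mem_filter.mp hy).2
    have h := mul_plusOp_minusOp α ψ y
    rw [hy, heig y hy, Fintype.card_fin] at h
    linear_combination ψ y * h
  have hchoose : (n.choose (ℓ + 1) : ℝ) * (ℓ + 1) = n.choose ℓ * (n - ℓ) := by
    rw [← Nat.cast_sub hℓn.le]
    exact_mod_cast Nat.choose_succ_right_eq n ℓ
  have hnℓ : (0 : ℝ) < n - ℓ := sub_pos.mpr (by exact_mod_cast hℓn)
  have hC : (0 : ℝ) < n.choose (ℓ + 1) := by exact_mod_cast Nat.choose_pos hℓn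
  have hC' : (0 : ℝ) < n.choose ℓ := by exact_mod_cast Nat.choose_pos hℓn.le
  unfold innerL
  rw [Fintype.card_fin]
  field_simp
  linear_combination (n - ℓ : ℝ) * n.choose ℓ * hsum
    - (α * (ℓ + 1) * (n - ℓ) - lam) * (∑ y with countB y = ℓ, ψ y ^ 2) * hchoose

/-- On the complete graph K_n, ⟨ψ₋, ψ₋⟩ = ((ℓ+1)/(α(n-ℓ)))·(α(ℓ+1)(n-ℓ) - λ)·⟨ψ, ψ⟩. -/
theorem minusOp_length {n : ℕ} (hn : 1 ≤ n) (ℓ : ℕ) (hℓn : ℓ < n)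
    (α : ℝ) (hα : 0 < α)
    (ψ : (Fin n → Bool) → ℝ) (lam : ℝ)
    (hψ : ∃ x, countB x = ℓ ∧ ψ x ≠ 0)
    (heig : ∀ x, countB x = ℓ →
      negGen (⊤ : SimpleGraph (Fin n)) α ψ x = lam * ψ x) :
    innerL (ℓ + 1) (minusOp ψ) (minusOp ψ)
      = (((ℓ : ℝ) + 1) / (α * ((n : ℝ) - ℓ))) * (α * ((ℓ : ℝ) + 1) * ((n : ℝ) - ℓ) - lam)
          * innerL ℓ ψ ψ :=
  minusOp_length_general ℓ hℓn α hα ψ lam heig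
end

section
/- Let n ≥ 1, α > 0, and let Q_n^(ℓ) be the generator of the symmetric exclusion process on K_n with ℓ black marbles and rate α. If ψ and ψ' are orthogonal eigenvectors of -Q_n^(ℓ) (i.e. ⟨ψ, ψ'⟩ = 0), then ⟨ψ_+, ψ'_+⟩ = 0 and ⟨ψ_-, ψ'_-⟩ = 0, where ψ_+ and ψ_- are defined by ψ_+(x) = Σ_{v:x(v)=0} ψ(x_v) on (ℓ-1)-subsets and ψ_-(x) = Σ_{v:x(v)=1} ψ(x_v) on (ℓ+1)-subsets. -/
open Finset

section Helpers

variable {n : ℕ}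

lemma swapAt_eq_self_s6 {y : Fin n → Bool} {u v : Fin n} (h : y u = y v) :
    swapAt y u v = y := by
  funext w; unfold swapAt
  by_cases h1 : w = u
  · subst h1; simp [h.symm]
  · by_cases h2 : w = v
    · subst h2; simp [h1, h]
    · simp [h1, h2]

lemma swapAt_comm (y : Fin n → Bool) (u v : Fin n) :
    swapAt y u v = swapAt y v u := by
  funext w; unfold swapAt
  rcases eq_or_ne w u with rfl | h1
  · rcases eq_or_ne w v with rfl | h2
    · simp
    · simp [h2]
  · rcases eq_or_ne w v with rfl | h2
    · simp [h1]
    · simp [h1, h2]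

lemma upd_ft {x : Fin n → Bool} {v : Fin n} (h : x v = false) :
    Function.update (Function.update x v true) v false = x := by
  funext w
  by_cases hw : w = v
  · subst hw; simp [h]
  · simp [Function.update_apply, hw]

lemma upd_tf {x : Fin n → Bool} {v : Fin n} (h : x v = true) :
    Function.update (Function.update x v false) v true = x := by
  funext w
  by_cases hw : w = v
  · subst hw; simp [h]
  · simp [Function.update_apply, hw]

lemma upd_swap_plus {y : Fin n → Bool} {v w : Fin n} (hv : y v = true) (hw : y w = false)
    (hvw : w ≠ v) :
    Function.update (Function.update y v false) w true = swapAt y v w := by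
  funext z; unfold swapAt
  by_cases h1 : z = v
  · subst h1; simp [Function.update_apply, hvw.symm, hw]
  · by_cases h2 : z = w
    · subst h2; simp [Function.update_apply, h1, hv]
    · simp [Function.update_apply, h1, h2]

lemma upd_swap_minus {y : Fin n → Bool} {v w : Fin n} (hv : y v = false) (hw : y w = true)
    (hvw : w ≠ v) :
    Function.update (Function.update y v true) w false = swapAt y w v := by
  funext z; unfold swapAt
  by_cases h1 : z = w
  · subst h1; simp [Function.update_apply, hvw, hv]
  · by_cases h2 : z = v
    · subst h2; simp [Function.update_apply, h1, hw]
    · simp [Function.update_apply, h1, h2]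

lemma countB_update_true_s6 {x : Fin n → Bool} {v : Fin n} (h : x v = false) :
    countB (Function.update x v true) = countB x + 1 := by
  unfold countB
  have hset : (Finset.univ.filter fun w => Function.update x v true w = true)
      = insert v (Finset.univ.filter fun w => x w = true) := by
    ext w
    by_cases hw : w = v
    · subst hw; simp
    · simp [Function.update_apply, hw]
  rw [hset, Finset.card_insert_of_notMem (by simp [h])]

lemma countB_update_false_s6 {x : Fin n → Bool} {v : Fin n} (h : x v = true) :
    countB (Function.update x v false) + 1 = countB x := by
  have h2 := countB_update_true_s6 (x := Function.update x v false) (v := v) (by simp)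
  rw [upd_tf h] at h2; exact h2.symm

lemma filter_update_false {y : Fin n → Bool} {v : Fin n} (hv : y v = true) :
    (Finset.univ.filter fun w => Function.update y v false w = false)
      = insert v (Finset.univ.filter fun w => y w = false) := by
  ext w
  by_cases hw : w = v
  · subst hw; simp
  · simp [Function.update_apply, hw]

lemma filter_update_true {y : Fin n → Bool} {v : Fin n} (hv : y v = false) :
    (Finset.univ.filter fun w => Function.update y v true w = true)
      = insert v (Finset.univ.filter fun w => y w = true) := by
  ext w
  by_cases hw : w = v
  · subst hw; simp
  · simp [Function.update_apply, hw]

lemma card_filter_false {y : Fin n → Bool} {ℓ : ℕ} (hy : countB y = ℓ) :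
    (Finset.univ.filter fun w => y w = false).card = n - ℓ := by
  have hset : (Finset.univ.filter fun w => y w = false)
      = (Finset.univ.filter fun w => y w = true)ᶜ := by
    ext w; simp
  rw [hset, Finset.card_compl]
  have : (Finset.univ.filter fun w => y w = true).card = ℓ := hy
  rw [this, Fintype.card_fin]

lemma reindex (ℓ : ℕ) (F : (Fin n → Bool) → Fin n → ℝ) :
    ∑ x ∈ Finset.univ.filter (fun x : Fin n → Bool => countB x = ℓ),
      ∑ v ∈ Finset.univ.filter (fun v => x v = false), F (Function.update x v true) v
    = ∑ y ∈ Finset.univ.filter (fun y : Fin n → Bool => countB y = ℓ + 1),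
      ∑ v ∈ Finset.univ.filter (fun v => y v = true), F y v := by
  rw [Finset.sum_sigma', Finset.sum_sigma']
  refine Finset.sum_nbij' (i := fun p => ⟨Function.update p.1 p.2 true, p.2⟩)
    (j := fun p => ⟨Function.update p.1 p.2 false, p.2⟩) ?_ ?_ ?_ ?_ ?_
  · rintro ⟨x, v⟩ hp
    simp only [Finset.mem_sigma, Finset.mem_filter, Finset.mem_univ, true_and] at hp ⊢
    exact ⟨by rw [countB_update_true_s6 hp.2, hp.1], by simp⟩
  · rintro ⟨y, v⟩ hp
    simp only [Finset.mem_sigma, Finset.mem_filter, Finset.mem_univ, true_and] at hp ⊢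
    refine ⟨?_, by simp⟩
    have := countB_update_false_s6 hp.2
    omega
  · rintro ⟨x, v⟩ hp
    simp only [Finset.mem_sigma, Finset.mem_filter, Finset.mem_univ, true_and] at hp
    simp [upd_ft hp.2]
  · rintro ⟨y, v⟩ hp
    simp only [Finset.mem_sigma, Finset.mem_filter, Finset.mem_univ, true_and] at hp
    simp [upd_tf hp.2]
  · rintro ⟨x, v⟩ _; rfl

end Helpers

lemma T_eq {n ℓ : ℕ} {α lam' : ℝ} (hα : α ≠ 0) (ψ' : (Fin n → Bool) → ℝ)
    (y : Fin n → Bool) (hy : countB y = ℓ)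
    (h : negGen (⊤ : SimpleGraph (Fin n)) α ψ' y = lam' * ψ' y) :
    ∑ v ∈ Finset.univ.filter (fun v => y v = true),
      ∑ w ∈ Finset.univ.filter (fun w => y w = false), ψ' (swapAt y v w)
    = (ℓ : ℝ) * ((n - ℓ : ℕ) : ℝ) * ψ' y - lam' / α * ψ' y := by
  unfold negGen at h
  simp only [SimpleGraph.top_adj] at h
  set T : ℝ := ∑ v ∈ Finset.univ.filter (fun v => y v = true),
      ∑ w ∈ Finset.univ.filter (fun w => y w = false), ψ' (swapAt y v w) with hT
  have hcardT : (Finset.univ.filter fun v => y v = true).card = ℓ := hy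
  have hcardF : (Finset.univ.filter fun w => y w = false).card = n - ℓ := card_filter_false hy
  have inner_true : ∀ u : Fin n, y u = true →
      (∑ v : Fin n, if u ≠ v then ψ' y - ψ' (swapAt y u v) else 0)
      = ∑ v ∈ Finset.univ.filter (fun v => y v = false), (ψ' y - ψ' (swapAt y u v)) := by
    intro u hu
    rw [← Finset.sum_filter_add_sum_filter_not Finset.univ (fun v => y v = false)]
    have z2 : ∑ v ∈ Finset.univ.filter (fun v => ¬ (y v = false)),
        (if u ≠ v then ψ' y - ψ' (swapAt y u v) else 0) = 0 := by
      apply Finset.sum_eq_zero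
      intro v hv
      simp only [Finset.mem_filter, Finset.mem_univ, true_and] at hv
      have hv' : y v = true := by revert hv; cases y v <;> simp
      by_cases huv : u = v
      · simp [huv]
      · rw [if_pos huv, swapAt_eq_self_s6 (by rw [hu, hv'])]
        simp
    rw [z2, add_zero]
    apply Finset.sum_congr rfl
    intro v hv
    simp only [Finset.mem_filter, Finset.mem_univ, true_and] at hv
    have huv : u ≠ v := fun e => by rw [e, hv] at hu; exact Bool.noConfusion hu
    rw [if_pos huv]
  have inner_false : ∀ u : Fin n, y u = false →
      (∑ v : Fin n, if u ≠ v then ψ' y - ψ' (swapAt y u v) else 0)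
      = ∑ v ∈ Finset.univ.filter (fun v => y v = true), (ψ' y - ψ' (swapAt y u v)) := by
    intro u hu
    rw [← Finset.sum_filter_add_sum_filter_not Finset.univ (fun v => y v = true)]
    have z2 : ∑ v ∈ Finset.univ.filter (fun v => ¬ (y v = true)),
        (if u ≠ v then ψ' y - ψ' (swapAt y u v) else 0) = 0 := by
      apply Finset.sum_eq_zero
      intro v hv
      simp only [Finset.mem_filter, Finset.mem_univ, true_and] at hv
      have hv' : y v = false := by revert hv; cases y v <;> simp
      by_cases huv : u = v
      · simp [huv]
      · rw [if_pos huv, swapAt_eq_self_s6 (by rw [hu, hv'])]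
        simp
    rw [z2, add_zero]
    apply Finset.sum_congr rfl
    intro v hv
    simp only [Finset.mem_filter, Finset.mem_univ, true_and] at hv
    have huv : u ≠ v := fun e => by rw [e, hv] at hu; exact Bool.noConfusion hu
    rw [if_pos huv]
  have hD : (∑ u : Fin n, ∑ v : Fin n, if u ≠ v then ψ' y - ψ' (swapAt y u v) else 0)
      = 2 * ((ℓ : ℝ) * ((n - ℓ : ℕ) : ℝ) * ψ' y - T) := by
    rw [← Finset.sum_filter_add_sum_filter_not Finset.univ (fun u => y u = true)]
    have hA : ∑ u ∈ Finset.univ.filter (fun u => y u = true),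
        ∑ v : Fin n, (if u ≠ v then ψ' y - ψ' (swapAt y u v) else 0)
        = (ℓ : ℝ) * ((n - ℓ : ℕ) : ℝ) * ψ' y - T := by
      rw [Finset.sum_congr rfl (fun u hu => inner_true u
        ((Finset.mem_filter.mp hu).2))]
      simp only [Finset.sum_sub_distrib, Finset.sum_const, nsmul_eq_mul, hcardT, hcardF]
      rw [← hT]
      ring
    have hfilt : (Finset.univ.filter fun u => ¬ (y u = true))
        = Finset.univ.filter fun u => y u = false := by
      ext u; simp
    have hB : ∑ u ∈ Finset.univ.filter (fun u => ¬ (y u = true)),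
        ∑ v : Fin n, (if u ≠ v then ψ' y - ψ' (swapAt y u v) else 0)
        = (ℓ : ℝ) * ((n - ℓ : ℕ) : ℝ) * ψ' y - T := by
      rw [hfilt]
      rw [Finset.sum_congr rfl (fun u hu => inner_false u
        ((Finset.mem_filter.mp hu).2))]
      have hcomm : ∑ u ∈ Finset.univ.filter (fun u => y u = false),
          ∑ v ∈ Finset.univ.filter (fun v => y v = true), ψ' (swapAt y u v) = T := by
        rw [Finset.sum_comm, hT]
        refine Finset.sum_congr rfl fun v _ => Finset.sum_congr rfl fun u _ => ?_
        rw [swapAt_comm]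
      simp only [Finset.sum_sub_distrib, Finset.sum_const, nsmul_eq_mul, hcardT, hcardF]
      rw [hcomm]
      ring
    rw [hA, hB]; ring
  rw [hD] at h
  have h2 : α * ((ℓ : ℝ) * ((n - ℓ : ℕ) : ℝ) * ψ' y - T) = lam' * ψ' y := by
    linarith
  have h3 : (ℓ : ℝ) * ((n - ℓ : ℕ) : ℝ) * ψ' y - T = lam' / α * ψ' y := by
    field_simp
    linarith
  linarith

/-- The operations ψ ↦ ψ₊ and ψ ↦ ψ₋ preserve orthogonality of eigenvectors on K_n. -/
theorem plusOp_minusOp_preserve_orthogonality {n : ℕ} (hn : 1 ≤ n)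
    (ℓ : ℕ) (hℓ1 : 1 ≤ ℓ) (hℓn : ℓ < n)
    (α : ℝ) (hα : 0 < α)
    (ψ ψ' : (Fin n → Bool) → ℝ) (lam lam' : ℝ)
    (hψ : ∃ x, countB x = ℓ ∧ ψ x ≠ 0)
    (hψ' : ∃ x, countB x = ℓ ∧ ψ' x ≠ 0)
    (heig : ∀ x, countB x = ℓ →
      negGen (⊤ : SimpleGraph (Fin n)) α ψ x = lam * ψ x)
    (heig' : ∀ x, countB x = ℓ →
      negGen (⊤ : SimpleGraph (Fin n)) α ψ' x = lam' * ψ' x)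
    (horth : innerL ℓ ψ ψ' = 0) :
    innerL (ℓ - 1) (plusOp ψ) (plusOp ψ') = 0 ∧
      innerL (ℓ + 1) (minusOp ψ) (minusOp ψ') = 0 := by
  have hαne : α ≠ 0 := ne_of_gt hα
  -- S = 0
  have hS : ∑ x ∈ Finset.univ.filter (fun x : Fin n → Bool => countB x = ℓ),
      ψ x * ψ' x = 0 := by
    unfold innerL at horth
    rcases mul_eq_zero.mp horth with h | h
    · exfalso
      rw [Fintype.card_fin] at h
      have : ((n.choose ℓ : ℝ)) ≠ 0 :=
        Nat.cast_ne_zero.mpr (Nat.choose_pos hℓn.le).ne'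
      exact this (inv_eq_zero.mp h)
    · exact h
  have hT := fun (y : Fin n → Bool) (hy : countB y = ℓ) =>
    T_eq hαne ψ' y hy (heig' y hy)
  -- key pointwise identities
  have hkeyp : ∀ y ∈ Finset.univ.filter (fun y : Fin n → Bool => countB y = ℓ),
      (∑ v ∈ Finset.univ.filter (fun v => y v = true),
        ψ y * plusOp ψ' (Function.update y v false))
      = ((ℓ : ℝ) + (ℓ : ℝ) * ((n - ℓ : ℕ) : ℝ) - lam' / α) * (ψ y * ψ' y) := by
    intro y hy
    have hy' : countB y = ℓ := (Finset.mem_filter.mp hy).2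
    have step : ∀ v ∈ Finset.univ.filter (fun v => y v = true),
        plusOp ψ' (Function.update y v false)
        = ψ' y + ∑ w ∈ Finset.univ.filter (fun w => y w = false), ψ' (swapAt y v w) := by
      intro v hv
      have hv' : y v = true := (Finset.mem_filter.mp hv).2
      unfold plusOp
      rw [filter_update_false hv', Finset.sum_insert (by simp [hv'])]
      congr 1
      · rw [upd_tf hv']
      · apply Finset.sum_congr rfl
        intro w hw
        have hw' : y w = false := (Finset.mem_filter.mp hw).2
        have hwv : w ≠ v := fun e => by rw [e, hv'] at hw'; exact Bool.noConfusion hw'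
        rw [upd_swap_plus hv' hw' hwv]
    rw [Finset.sum_congr rfl (fun v hv => by rw [step v hv])]
    simp only [mul_add, Finset.sum_add_distrib, Finset.sum_const, nsmul_eq_mul]
    have hc : (Finset.univ.filter fun v => y v = true).card = ℓ := hy'
    rw [hc, ← Finset.mul_sum, hT y hy']
    ring
  have hkeym : ∀ y ∈ Finset.univ.filter (fun y : Fin n → Bool => countB y = ℓ),
      (∑ v ∈ Finset.univ.filter (fun v => y v = false),
        ψ y * minusOp ψ' (Function.update y v true))
      = (((n - ℓ : ℕ) : ℝ) + (ℓ : ℝ) * ((n - ℓ : ℕ) : ℝ) - lam' / α) * (ψ y * ψ' y) := by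
    intro y hy
    have hy' : countB y = ℓ := (Finset.mem_filter.mp hy).2
    have step : ∀ v ∈ Finset.univ.filter (fun v => y v = false),
        minusOp ψ' (Function.update y v true)
        = ψ' y + ∑ w ∈ Finset.univ.filter (fun w => y w = true), ψ' (swapAt y w v) := by
      intro v hv
      have hv' : y v = false := (Finset.mem_filter.mp hv).2
      unfold minusOp
      rw [filter_update_true hv', Finset.sum_insert (by simp [hv'])]
      congr 1
      · rw [upd_ft hv']
      · apply Finset.sum_congr rfl
        intro w hw
        have hw' : y w = true := (Finset.mem_filter.mp hw).2
        have hwv : w ≠ v := fun e => by rw [e, hv'] at hw'; exact Bool.noConfusion hw'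
        rw [upd_swap_minus hv' hw' hwv]
    rw [Finset.sum_congr rfl (fun v hv => by rw [step v hv])]
    simp only [mul_add, Finset.sum_add_distrib, Finset.sum_const, nsmul_eq_mul]
    have hc : (Finset.univ.filter fun v => y v = false).card = n - ℓ :=
      card_filter_false hy'
    have hcomm : ∑ v ∈ Finset.univ.filter (fun v => y v = false),
        ∑ w ∈ Finset.univ.filter (fun w => y w = true), ψ' (swapAt y w v)
        = ∑ w ∈ Finset.univ.filter (fun w => y w = true),
          ∑ v ∈ Finset.univ.filter (fun v => y v = false), ψ' (swapAt y w v) :=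
      Finset.sum_comm
    rw [hc, ← Finset.mul_sum, hcomm, hT y hy']
    ring
  constructor
  · -- plus part
    have e1 : ∀ x ∈ Finset.univ.filter (fun x : Fin n → Bool => countB x = ℓ - 1),
        plusOp ψ x * plusOp ψ' x
        = ∑ v ∈ Finset.univ.filter (fun v => x v = false),
            (fun (y : Fin n → Bool) (v : Fin n) =>
              ψ y * plusOp ψ' (Function.update y v false)) (Function.update x v true) v := by
      intro x _
      show plusOp ψ x * plusOp ψ' x = _
      unfold plusOp
      rw [Finset.sum_mul]
      apply Finset.sum_congr rfl
      intro v hv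
      have hv' : x v = false := (Finset.mem_filter.mp hv).2
      simp only
      rw [upd_ft hv']
    have hps : ∑ x ∈ Finset.univ.filter (fun x : Fin n → Bool => countB x = ℓ - 1),
        plusOp ψ x * plusOp ψ' x
        = ((ℓ : ℝ) + (ℓ : ℝ) * ((n - ℓ : ℕ) : ℝ) - lam' / α)
          * ∑ y ∈ Finset.univ.filter (fun y : Fin n → Bool => countB y = ℓ),
              ψ y * ψ' y := by
      rw [Finset.sum_congr rfl e1,
        reindex (ℓ - 1) (fun (y : Fin n → Bool) (v : Fin n) =>
          ψ y * plusOp ψ' (Function.update y v false)),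
        show ℓ - 1 + 1 = ℓ by omega,
        Finset.sum_congr rfl hkeyp, ← Finset.mul_sum]
    unfold innerL
    rw [hps, hS, mul_zero, mul_zero]
  · -- minus part
    have e1 : ∀ x ∈ Finset.univ.filter (fun x : Fin n → Bool => countB x = ℓ + 1),
        minusOp ψ x * minusOp ψ' x
        = ∑ v ∈ Finset.univ.filter (fun v => x v = true),
            (fun (y : Fin n → Bool) (v : Fin n) =>
              ψ (Function.update y v false) * minusOp ψ' y) x v := by
      intro x _
      show minusOp ψ x * minusOp ψ' x = _
      unfold minusOp
      rw [Finset.sum_mul]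
    have hms : ∑ x ∈ Finset.univ.filter (fun x : Fin n → Bool => countB x = ℓ + 1),
        minusOp ψ x * minusOp ψ' x
        = (((n - ℓ : ℕ) : ℝ) + (ℓ : ℝ) * ((n - ℓ : ℕ) : ℝ) - lam' / α)
          * ∑ y ∈ Finset.univ.filter (fun y : Fin n → Bool => countB y = ℓ),
              ψ y * ψ' y := by
      rw [Finset.sum_congr rfl e1,
        ← reindex ℓ (fun (y : Fin n → Bool) (v : Fin n) =>
          ψ (Function.update y v false) * minusOp ψ' y)]
      have e2 : ∀ y ∈ Finset.univ.filter (fun y : Fin n → Bool => countB y = ℓ),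
          (∑ v ∈ Finset.univ.filter (fun v => y v = false),
            (fun (z : Fin n → Bool) (v : Fin n) =>
              ψ (Function.update z v false) * minusOp ψ' z) (Function.update y v true) v)
          = ∑ v ∈ Finset.univ.filter (fun v => y v = false),
              ψ y * minusOp ψ' (Function.update y v true) := by
        intro y _
        apply Finset.sum_congr rfl
        intro v hv
        have hv' : y v = false := (Finset.mem_filter.mp hv).2
        simp only
        rw [upd_ft hv']
      rw [Finset.sum_congr rfl e2, Finset.sum_congr rfl hkeym, ← Finset.mul_sum]
    unfold innerL
    rw [hms, hS, mul_zero, mul_zero]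
end

section
/- Let, for each n, S_n be a finite state space with a stationary reversible continuous-time Markov chain X^(n), with orthonormal eigenbasis {ψ_i^(n)} of the negative generator and eigenvalues {λ_i^(n)}, indexed so λ_1^(n) = 0 corresponds to the constant eigenvector. A sequence of Boolean functions f_n : S_n → {0,1} satisfies lim_{ε→0} limsup_n P(f_n(X_0^(n)) ≠ f_n(X_ε^(n))) = 0 if and only if for every δ > 0 there exists k ∈ ℕ such that sup_n Σ_{i : λ_i^(n) ≥ k} ⟨f_n, ψ_i^(n)⟩² < δ. -/
/-!
In the eigenbasis `exp (ε • Q)` acts diagonally with weights `exp (-ε λᵢ)`; since it fixes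
the constant function and (by symmetry of the spectral pairing) preserves `π`, the Dirichlet form
`∑ π x E x y (f x - f y)²` equals `2 ∑ᵢ (1 - exp (-ε λᵢ)) ⟨f, ψᵢ⟩²`, and the total spectral mass
`∑ᵢ ⟨f, ψᵢ⟩² = E[f²]` is at most `1`.
Since `1 - exp (-ε λ) ≤ ε k` below level `k` and `≤ 1` above it, the noise
`∑ᵢ (1 - exp (-ε λᵢ)) ⟨f, ψᵢ⟩²` is at most `ε k + tail(k)`, which gives stability from uniformly
small tails. Conversely the noise is at least `(1 - exp (-ε k)) tail(k)`, which controls the tails of all large `n`; each of the finitely many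
remaining chains has finitely many eigenvalues, all below some `k`.
-/

open Finset Filter

section MatrixExponential

open Matrix

theorem Matrix.exp_mulVec_of_mulVec_eq_smul {m : Type*} [Fintype m] [DecidableEq m]
    {M : Matrix m m ℝ} {v : m → ℝ} {μ : ℝ} (h : M *ᵥ v = μ • v) :
    NormedSpace.exp M *ᵥ v = Real.exp μ • v := by
  -- any matrix norm will do: it only serves to sum the exponential series
  let _ : NormedRing (Matrix m m ℝ) := Matrix.linftyOpNormedRing
  let _ : NormedAlgebra ℝ (Matrix m m ℝ) := Matrix.linftyOpNormedAlgebra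
  have hpow : ∀ k : ℕ, M ^ k *ᵥ v = μ ^ k • v := by
    intro k
    induction k with
    | zero => simp
    | succ k ih =>
      rw [pow_succ', ← Matrix.mulVec_mulVec, ih, Matrix.mulVec_smul, h, smul_smul, pow_succ]
  let L : Matrix m m ℝ →ₗ[ℝ] m → ℝ :=
    { toFun := (· *ᵥ v)
      map_add' := (Matrix.add_mulVec · · v)
      map_smul' := (Matrix.smul_mulVec · · v) }
  have hL := (NormedSpace.exp_series_hasSum_exp' (𝕂 := ℝ) M).mapL L.toContinuousLinearMap
  have hterm : ∀ k : ℕ, L.toContinuousLinearMap ((k.factorial : ℝ)⁻¹ • M ^ k)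
      = ((k.factorial : ℝ)⁻¹ • μ ^ k) • v := fun k => by
    change (_ • M ^ k) *ᵥ v = _
    rw [Matrix.smul_mulVec, hpow, smul_smul, smul_eq_mul]
  simp only [hterm] at hL
  rw [Real.exp_eq_exp_ℝ]
  exact hL.unique ((NormedSpace.exp_series_hasSum_exp' (𝕂 := ℝ) μ).smul_const v)

lemma exp_smul_mulVec_of_neg_mulVec_eq_smul {m : Type*} [Fintype m] [DecidableEq m]
    {Q : Matrix m m ℝ} {v : m → ℝ} {μ : ℝ} (h : -Q *ᵥ v = μ • v) (ε : ℝ) :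
    NormedSpace.exp (ε • Q) *ᵥ v = Real.exp (-(ε * μ)) • v := by
  refine Matrix.exp_mulVec_of_mulVec_eq_smul ?_
  rw [Matrix.smul_mulVec, ← neg_neg (Q *ᵥ v), ← Matrix.neg_mulVec, h, smul_neg, smul_smul,
    neg_smul]

lemma exp_smul_mulVec_one {m : Type*} [Fintype m] [DecidableEq m] {Q : Matrix m m ℝ}
    (hQ : ∀ x, ∑ y, Q x y = 0) (ε : ℝ) : NormedSpace.exp (ε • Q) *ᵥ 1 = 1 := by
  have h : -Q *ᵥ 1 = (0 : ℝ) • 1 := funext fun x => by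
    simp [Matrix.mulVec, dotProduct, hQ x]
  simpa using exp_smul_mulVec_of_neg_mulVec_eq_smul h ε

end MatrixExponential

section SpectralExpansion

open Matrix

variable {α ι : Type*} [Fintype α] [Fintype ι] {π : α → ℝ} {ψ : ι → α → ℝ}

def spectralCoeff (π : α → ℝ) (ψ : ι → α → ℝ) (g : α → ℝ) (i : ι) : ℝ :=
  ∑ x, π x * g x * ψ i x

lemma sum_mul_sum_mul_eq_sum_mul_spectralCoeff (g : α → ℝ) (b : ι → ℝ) :
    ∑ x, π x * g x * ∑ i, b i * ψ i x = ∑ i, b i * spectralCoeff π ψ g i := by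
  simp only [spectralCoeff, Finset.mul_sum]
  rw [Finset.sum_comm]
  exact Finset.sum_congr rfl fun i _ => Finset.sum_congr rfl fun x _ => by ring

variable (hcomplete : ∀ (g : α → ℝ) x, g x = ∑ i, spectralCoeff π ψ g i * ψ i x)
include hcomplete

lemma sum_mul_eq_sum_spectralCoeff_mul (g h : α → ℝ) :
    ∑ x, π x * g x * h x = ∑ i, spectralCoeff π ψ g i * spectralCoeff π ψ h i := by
  conv_lhs => enter [2, x]; rw [hcomplete h x]
  rw [sum_mul_sum_mul_eq_sum_mul_spectralCoeff]
  exact Finset.sum_congr rfl fun i _ => mul_comm _ _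

lemma sum_spectralCoeff_sq_le_one (hπ : ∀ x, 0 ≤ π x) (hπsum : ∑ x, π x = 1) {g : α → ℝ}
    (hg : ∀ x, |g x| ≤ 1) : ∑ i, spectralCoeff π ψ g i ^ 2 ≤ 1 := by
  simp only [sq, ← sum_mul_eq_sum_spectralCoeff_mul hcomplete]
  calc ∑ x, π x * g x * g x ≤ ∑ x, π x := Finset.sum_le_sum fun x _ => by
        rw [mul_assoc]
        exact mul_le_of_le_one_right (hπ x)
          (by nlinarith [abs_mul_abs_self (g x), hg x, abs_nonneg (g x)])
    _ = 1 := hπsum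

variable {E : Matrix α α ℝ} {c : ι → ℝ} (hE : ∀ i, E *ᵥ ψ i = c i • ψ i)
include hE

lemma mulVec_apply_eq_sum_spectralCoeff (h : α → ℝ) (x : α) :
    (E *ᵥ h) x = ∑ i, c i * spectralCoeff π ψ h i * ψ i x := by
  have hh : h = ∑ i, spectralCoeff π ψ h i • ψ i := funext fun x => by
    simpa only [Finset.sum_apply, Pi.smul_apply, smul_eq_mul] using hcomplete h x
  conv_lhs => rw [hh]
  simp only [Matrix.mulVec_sum, Matrix.mulVec_smul, hE, smul_smul, Finset.sum_apply,
    Pi.smul_apply, smul_eq_mul]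
  exact Finset.sum_congr rfl fun i _ => by ring

lemma sum_mul_mulVec_eq_sum_spectralCoeff_mul (g h : α → ℝ) :
    ∑ x, π x * g x * (E *ᵥ h) x
      = ∑ i, c i * spectralCoeff π ψ g i * spectralCoeff π ψ h i := by
  simp only [mulVec_apply_eq_sum_spectralCoeff hcomplete hE,
    sum_mul_sum_mul_eq_sum_mul_spectralCoeff]
  exact Finset.sum_congr rfl fun i _ => by ring

lemma sum_mul_mulVec_eq_of_mulVec_one (hE1 : E *ᵥ 1 = 1) (h : α → ℝ) :
    ∑ x, π x * (E *ᵥ h) x = ∑ x, π x * h x := by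
  calc ∑ x, π x * (E *ᵥ h) x = ∑ x, π x * (1 : α → ℝ) x * (E *ᵥ h) x := by simp
    _ = ∑ i, c i * spectralCoeff π ψ 1 i * spectralCoeff π ψ h i :=
      sum_mul_mulVec_eq_sum_spectralCoeff_mul hcomplete hE 1 h
    _ = ∑ i, c i * spectralCoeff π ψ h i * spectralCoeff π ψ 1 i :=
      Finset.sum_congr rfl fun i _ => by ring
    _ = ∑ x, π x * h x * (E *ᵥ 1) x :=
      (sum_mul_mulVec_eq_sum_spectralCoeff_mul hcomplete hE h 1).symm
    _ = ∑ x, π x * h x := by simp [hE1]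

theorem sum_sum_mul_sub_sq_eq (hE1 : E *ᵥ 1 = 1) (g : α → ℝ) :
    ∑ x, ∑ y, π x * E x y * (g x - g y) ^ 2
      = 2 * ∑ i, (1 - c i) * spectralCoeff π ψ g i ^ 2 := by
  have hexpand : ∀ x, ∑ y, π x * E x y * (g x - g y) ^ 2
      = π x * g x * g x * (E *ᵥ 1) x - 2 * (π x * g x * (E *ᵥ g) x)
        + π x * (E *ᵥ (g * g)) x := fun x => by
    simp only [Matrix.mulVec, dotProduct, Finset.mul_sum, ← Finset.sum_sub_distrib,
      ← Finset.sum_add_distrib]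
    exact Finset.sum_congr rfl fun y _ => by simp only [Pi.one_apply, Pi.mul_apply]; ring
  simp only [hexpand, Finset.sum_add_distrib, Finset.sum_sub_distrib, ← Finset.mul_sum, hE1,
    Pi.one_apply, mul_one, sum_mul_mulVec_eq_of_mulVec_one hcomplete hE hE1,
    sum_mul_mulVec_eq_sum_spectralCoeff_mul hcomplete hE, Pi.mul_apply]
  simp only [← mul_assoc, sum_mul_eq_sum_spectralCoeff_mul hcomplete, Finset.mul_sum,
    ← Finset.sum_sub_distrib, ← Finset.sum_add_distrib]
  exact Finset.sum_congr rfl fun i _ => by ring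

end SpectralExpansion

section SpectralNoise

variable {ι : Type*} [Fintype ι]

noncomputable def spectralNoise (lam a : ι → ℝ) (ε : ℝ) : ℝ :=
  ∑ i, (1 - Real.exp (-(ε * lam i))) * a i

noncomputable def spectralTail (lam a : ι → ℝ) (k : ℝ) : ℝ :=
  ∑ i, if k ≤ lam i then a i else 0

variable {lam a : ι → ℝ}

lemma spectralTail_nonneg (ha : ∀ i, 0 ≤ a i) (k : ℝ) : 0 ≤ spectralTail lam a k :=
  Finset.sum_nonneg fun i _ => by split_ifs <;> simp [ha i]

lemma spectralTail_eq_zero (hk : ∀ i, lam i < k) : spectralTail lam a k = 0 :=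
  Finset.sum_eq_zero fun i _ => if_neg (hk i).not_ge

lemma spectralNoise_nonneg (hlam : ∀ i, 0 ≤ lam i) (ha : ∀ i, 0 ≤ a i) {ε : ℝ} (hε : 0 ≤ ε) :
    0 ≤ spectralNoise lam a ε :=
  Finset.sum_nonneg fun i _ => mul_nonneg
    (sub_nonneg.2 (Real.exp_le_one_iff.2 (neg_nonpos.2 (mul_nonneg hε (hlam i))))) (ha i)

lemma spectralNoise_le_sum (ha : ∀ i, 0 ≤ a i) (ε : ℝ) : spectralNoise lam a ε ≤ ∑ i, a i :=
  Finset.sum_le_sum fun i _ =>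
    mul_le_of_le_one_left (ha i) (by linarith [Real.exp_pos (-(ε * lam i))])

lemma spectralNoise_le_mul_add_spectralTail (ha : ∀ i, 0 ≤ a i) {ε k : ℝ} (hε : 0 ≤ ε)
    (hk : 0 ≤ k) : spectralNoise lam a ε ≤ ε * k * ∑ i, a i + spectralTail lam a k := by
  rw [spectralNoise, spectralTail, Finset.mul_sum, ← Finset.sum_add_distrib]
  refine Finset.sum_le_sum fun i _ => ?_
  have hexp := Real.exp_pos (-(ε * lam i))
  split_ifs with hki
  · nlinarith [ha i, mul_nonneg hε hk]
  · have hlin : 1 - Real.exp (-(ε * lam i)) ≤ ε * k := by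
      linarith [Real.add_one_le_exp (-(ε * lam i)),
        mul_le_mul_of_nonneg_left (not_le.1 hki).le hε]
    simpa using mul_le_mul_of_nonneg_right hlin (ha i)

lemma mul_spectralTail_le_spectralNoise (hlam : ∀ i, 0 ≤ lam i) (ha : ∀ i, 0 ≤ a i) {ε : ℝ}
    (hε : 0 ≤ ε) (k : ℝ) :
    (1 - Real.exp (-(ε * k))) * spectralTail lam a k ≤ spectralNoise lam a ε := by
  rw [spectralNoise, spectralTail, Finset.mul_sum]
  refine Finset.sum_le_sum fun i _ => ?_
  split_ifs with hki
  · have : Real.exp (-(ε * lam i)) ≤ Real.exp (-(ε * k)) :=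
      Real.exp_le_exp.2 (neg_le_neg (mul_le_mul_of_nonneg_left hki hε))
    nlinarith [ha i]
  · simpa using mul_nonneg
      (sub_nonneg.2 (Real.exp_le_one_iff.2 (neg_nonpos.2 (mul_nonneg hε (hlam i))))) (ha i)

end SpectralNoise

section UniformSpectralTail

open scoped Topology

variable {ι : ℕ → Type*} [∀ n, Fintype (ι n)] {lam a : ∀ n, ι n → ℝ} {C : ℝ}

lemma isBoundedUnder_spectralNoise (ha : ∀ n i, 0 ≤ a n i) (hC : ∀ n, ∑ i, a n i ≤ C)
    (ε : ℝ) : IsBoundedUnder (· ≤ ·) atTop fun n => 2 * spectralNoise (lam n) (a n) ε :=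
  isBoundedUnder_of ⟨2 * C, fun n => by
    linarith [spectralNoise_le_sum (ha n) ε (lam := lam n), hC n]⟩

lemma exists_spectralTail_lt_of_tendsto (hlam : ∀ n i, 0 ≤ lam n i) (ha : ∀ n i, 0 ≤ a n i)
    (hC : ∀ n, ∑ i, a n i ≤ C)
    (hT : Tendsto (fun ε => limsup (fun n => 2 * spectralNoise (lam n) (a n) ε) atTop)
      (𝓝[>] 0) (𝓝 0)) {δ : ℝ} (hδ : 0 < δ) :
    ∃ k : ℕ, ∀ n, spectralTail (lam n) (a n) k < δ := by
  obtain ⟨ε, hεδ, hε⟩ := ((hT.eventually (gt_mem_nhds hδ)).and self_mem_nhdsWithin).exists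
  obtain ⟨N, hN⟩ := eventually_atTop.1
    (eventually_lt_of_limsup_lt hεδ (isBoundedUnder_spectralNoise ha hC ε))
  obtain ⟨B, hB⟩ : BddAbove (⋃ m < N, Set.range (lam m)) :=
    ((Set.finite_lt_nat N).biUnion fun m _ => Set.finite_range (lam m)).bddAbove
  obtain ⟨k, hk⟩ := exists_nat_gt (max B (Real.log 2 / ε))
  refine ⟨k, fun n => ?_⟩
  rcases lt_or_ge n N with hn | hn
  · rw [spectralTail_eq_zero fun i => ?_]
    · exact hδ
    · exact (hB (Set.mem_biUnion hn ⟨i, rfl⟩)).trans_lt ((le_max_left _ _).trans_lt hk)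
  · have hlog : Real.log 2 < ε * k := (div_lt_iff₀' hε).1 ((le_max_right _ _).trans_lt hk)
    have hhalf : Real.exp (-(ε * k)) < 1 / 2 := by
      calc Real.exp (-(ε * k)) < Real.exp (-Real.log 2) := Real.exp_lt_exp.2 (neg_lt_neg hlog)
        _ = 1 / 2 := by rw [Real.exp_neg, Real.exp_log two_pos, one_div]
    have htail := spectralTail_nonneg (ha n) (lam := lam n) k
    calc spectralTail (lam n) (a n) k
        ≤ 2 * ((1 - Real.exp (-(ε * k))) * spectralTail (lam n) (a n) k) := by nlinarith
      _ ≤ 2 * spectralNoise (lam n) (a n) ε := by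
        gcongr; exact mul_spectralTail_le_spectralNoise (hlam n) (ha n) hε.le k
      _ < δ := hN n hn

lemma tendsto_of_forall_exists_spectralTail_lt (hlam : ∀ n i, 0 ≤ lam n i)
    (ha : ∀ n i, 0 ≤ a n i) (hC : ∀ n, ∑ i, a n i ≤ C)
    (hk : ∀ δ : ℝ, 0 < δ → ∃ k : ℕ, ∀ n, spectralTail (lam n) (a n) k < δ) :
    Tendsto (fun ε => limsup (fun n => 2 * spectralNoise (lam n) (a n) ε) atTop)
      (𝓝[>] 0) (𝓝 0) := by
  refine tendsto_order.2 ⟨fun b hb => ?_, fun b hb => ?_⟩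
  · filter_upwards [self_mem_nhdsWithin] with ε hε
    refine hb.trans_le (le_limsup_of_frequently_le (Frequently.of_forall fun n => ?_)
      (isBoundedUnder_spectralNoise ha hC ε))
    linarith [spectralNoise_nonneg (hlam n) (ha n) (le_of_lt hε)]
  · obtain ⟨k, hk⟩ := hk (b / 4) (by positivity)
    have hsmall : Tendsto (fun ε : ℝ => ε * k * C) (𝓝[>] 0) (𝓝 0) := by
      simpa using (((tendsto_id (x := 𝓝 (0 : ℝ))).mul_const (k : ℝ)).mul_const C).mono_left
        nhdsWithin_le_nhds
    filter_upwards [hsmall.eventually (gt_mem_nhds (by positivity : (0 : ℝ) < b / 8)),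
      self_mem_nhdsWithin] with ε hεC hε
    have hεk : 0 ≤ ε * k := mul_nonneg (le_of_lt hε) k.cast_nonneg
    refine lt_of_le_of_lt (limsup_le_of_le (isCoboundedUnder_le_of_le atTop (x := 0) fun n =>
      ?_) (Eventually.of_forall fun n => ?_)) (by linarith : 3 * b / 4 < b)
    · linarith [spectralNoise_nonneg (hlam n) (ha n) (le_of_lt hε)]
    · linarith [spectralNoise_le_mul_add_spectralTail (ha n) (le_of_lt hε) k.cast_nonneg
        (lam := lam n), mul_le_mul_of_nonneg_left (hC n) hεk, hk n]

theorem tendsto_limsup_spectralNoise_iff (hlam : ∀ n i, 0 ≤ lam n i) (ha : ∀ n i, 0 ≤ a n i)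
    (hC : ∀ n, ∑ i, a n i ≤ C) :
    Tendsto (fun ε => limsup (fun n => 2 * spectralNoise (lam n) (a n) ε) atTop)
      (𝓝[>] 0) (𝓝 0) ↔ ∀ δ : ℝ, 0 < δ → ∃ k : ℕ, ∀ n, spectralTail (lam n) (a n) k < δ :=
  ⟨fun hT _ => exists_spectralTail_lt_of_tendsto hlam ha hC hT,
    tendsto_of_forall_exists_spectralTail_lt hlam ha hC⟩

end UniformSpectralTail

theorem stability_spectral_characterization_general
    (S : ℕ → Type) [∀ n, Fintype (S n)] [∀ n, DecidableEq (S n)]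
    (π : ∀ n, S n → ℝ) (hπpos : ∀ n x, 0 < π n x) (hπsum : ∀ n, ∑ x, π n x = 1)
    (Q : ∀ n, Matrix (S n) (S n) ℝ) (hgen : ∀ n x, ∑ y, Q n x y = 0)
    (ψ : ∀ n, S n → S n → ℝ) (lam : ∀ n, S n → ℝ)
    (heig : ∀ n i, (-(Q n)).mulVec (ψ n i) = lam n i • ψ n i)
    (hlam : ∀ n i, 0 ≤ lam n i)
    (hcomplete : ∀ n (g : S n → ℝ) x,
      g x = ∑ i, (∑ y, π n y * g y * ψ n i y) * ψ n i x)
    (f : ∀ n, S n → ℝ) (hf : ∀ n x, f n x = 0 ∨ f n x = 1) :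
    Tendsto (fun ε : ℝ => limsup (fun n =>
        ∑ x, ∑ y, π n x * (NormedSpace.exp (ε • Q n)) x y * (f n x - f n y) ^ 2)
      atTop) (nhdsWithin 0 (Set.Ioi 0)) (nhds 0)
    ↔ ∀ δ : ℝ, 0 < δ → ∃ k : ℕ, ∀ n,
        (∑ i, if (k : ℝ) ≤ lam n i then (∑ x, π n x * f n x * ψ n i x) ^ 2 else 0) < δ := by
  have hdirichlet : ∀ (ε : ℝ) n,
      ∑ x, ∑ y, π n x * (NormedSpace.exp (ε • Q n)) x y * (f n x - f n y) ^ 2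
        = 2 * spectralNoise (lam n) (fun i => spectralCoeff (π n) (ψ n) (f n) i ^ 2) ε :=
    fun ε n => sum_sum_mul_sub_sq_eq (hcomplete n)
      (fun i => exp_smul_mulVec_of_neg_mulVec_eq_smul (heig n i) ε)
      (exp_smul_mulVec_one (hgen n) ε) (f n)
  have hmass : ∀ n, ∑ i, spectralCoeff (π n) (ψ n) (f n) i ^ 2 ≤ 1 := fun n =>
    sum_spectralCoeff_sq_le_one (hcomplete n) (fun x => (hπpos n x).le) (hπsum n)
      fun x => by rcases hf n x with h | h <;> simp [h]
  simp only [hdirichlet]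
  exact tendsto_limsup_spectralNoise_iff hlam (fun n i => sq_nonneg _) hmass

/-- Spectral characterization of exclusion/noise stability: for a sequence of stationary
reversible finite Markov chains with orthonormal eigenbases and Boolean functions fₙ,
lim_{ε→0⁺} limsup_n P(fₙ(X₀) ≠ fₙ(X_ε)) = 0 iff for every δ > 0 there is k ∈ ℕ with
sup_n Σ_{i : λᵢ⁽ⁿ⁾ ≥ k} ⟨fₙ, ψᵢ⁽ⁿ⁾⟩² < δ. -/
theorem stability_spectral_characterization
    (S : ℕ → Type) [∀ n, Fintype (S n)] [∀ n, DecidableEq (S n)]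
    (π : ∀ n, S n → ℝ) (hπpos : ∀ n x, 0 < π n x) (hπsum : ∀ n, ∑ x, π n x = 1)
    (Q : ∀ n, Matrix (S n) (S n) ℝ) (hgen : ∀ n x, ∑ y, Q n x y = 0)
    (hrev : ∀ n x y, π n x * Q n x y = π n y * Q n y x)
    (ψ : ∀ n, S n → S n → ℝ) (lam : ∀ n, S n → ℝ)
    (heig : ∀ n i, (-(Q n)).mulVec (ψ n i) = lam n i • ψ n i)
    (hlam : ∀ n i, 0 ≤ lam n i)
    (horth : ∀ n i j, ∑ x, π n x * ψ n i x * ψ n j x = if i = j then 1 else 0)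
    (hcomplete : ∀ n (g : S n → ℝ) x,
      g x = ∑ i, (∑ y, π n y * g y * ψ n i y) * ψ n i x)
    (f : ∀ n, S n → ℝ) (hf : ∀ n x, f n x = 0 ∨ f n x = 1) :
    Tendsto (fun ε : ℝ => limsup (fun n =>
        ∑ x, ∑ y, π n x * (NormedSpace.exp (ε • Q n)) x y * (f n x - f n y) ^ 2)
      atTop) (nhdsWithin 0 (Set.Ioi 0)) (nhds 0)
    ↔ ∀ δ : ℝ, 0 < δ → ∃ k : ℕ, ∀ n,
        (∑ i, if (k : ℝ) ≤ lam n i then (∑ x, π n x * f n x * ψ n i x) ^ 2 else 0) < δ :=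
  stability_spectral_characterization_general S π hπpos hπsum Q hgen ψ lam heig hlam hcomplete f hf
end
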